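/- arXiv:1902.10775 — 5 statements merged into one kernel-verified Lean document; each statement's English description precedes it below -/
import Mathlib

section
/- Removing a directed path of maximum length from a nonempty acyclic digraph decreases the excess by exactly one. -/
open Finset

variable {V : Type*}

/-- Out-degree of a vertex in a digraph. -/
noncomputable def outDeg (D : V → V → Prop) (v : V) : ℕ := Nat.card {u // D v u}

/-- In-degree of a vertex in a digraph. -/
noncomputable def inDeg (D : V → V → Prop) (v : V) : ℕ := Nat.card {u // D u v}

/-- The (signed) excess of a vertex: `d⁺(v) − d⁻(v)`. -/
noncomputable def exInt (D : V → V → Prop) (v : V) : ℤ :=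
  (outDeg D v : ℤ) - (inDeg D v : ℤ)

/-- Positive excess `ex⁺(v) = max{d⁺(v)−d⁻(v),0}`. -/
noncomputable def exPlus (D : V → V → Prop) (v : V) : ℕ := (exInt D v).toNat

/-- Negative excess `ex⁻(v) = max{d⁻(v)−d⁺(v),0}`. -/
noncomputable def exMinus (D : V → V → Prop) (v : V) : ℕ := (-(exInt D v)).toNat

/-- The excess of a digraph: `ex(D) = ∑_v ex⁺(v) = (1/2)∑_v |ex(v)|`. -/
noncomputable def exD [Fintype V] (D : V → V → Prop) : ℕ := ∑ v, exPlus D v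

/-- The list of (directed) edges traversed by a path, given as its list of vertices. -/
def pathEdges (p : List V) : List (V × V) := p.zip p.tail

/-- A directed path of `D` with at least one edge, given by its list of (distinct) vertices. -/
def IsPath (D : V → V → Prop) (p : List V) : Prop :=
  p.Nodup ∧ 2 ≤ p.length ∧ ∀ e ∈ pathEdges p, D e.1 e.2

/-- A path decomposition of `D`: a list of paths whose edge sets partition `E(D)`. -/
def IsPathDecomp (D : V → V → Prop) (Ps : List (List V)) : Prop :=
  (∀ p ∈ Ps, IsPath D p) ∧ ((Ps.map pathEdges).flatten.Nodup) ∧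
    ∀ u v : V, D u v ↔ (u, v) ∈ (Ps.map pathEdges).flatten

/-- A digraph is acyclic if it has no closed directed walk. -/
def Acyclic (D : V → V → Prop) : Prop :=
  ∀ (v : V) (c : List V), ¬ List.Chain D v (c ++ [v])

/-!
Let the path run from `a` to `z`. Deleting its edges lowers `d⁺` by one at every vertex of the
path except `z` and `d⁻` by one at every vertex except `a`, so `d⁺ − d⁻` changes only at the two
ends. A longest path in an acyclic digraph starts at a source and ends at a sink: an in-neighbour
of `a` off the path would extend it, one on the path would close a cycle. Hence
`ex⁺(a) = d⁺(a) ≥ 1` drops by exactly one, while `ex⁺(z)` is `0` before and after.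
-/

variable {D : V → V → Prop}

@[simp]
lemma pathEdges_nil : pathEdges ([] : List V) = [] := rfl

@[simp]
lemma pathEdges_singleton (a : V) : pathEdges [a] = [] := rfl

@[simp]
lemma pathEdges_cons_cons (a b : V) (l : List V) :
    pathEdges (a :: b :: l) = (a, b) :: pathEdges (b :: l) := rfl

lemma map_fst_pathEdges (p : List V) : (pathEdges p).map Prod.fst = p.dropLast := by
  induction p using List.twoStepInduction <;> simp_all

lemma map_snd_pathEdges (p : List V) : (pathEdges p).map Prod.snd = p.tail := by
  induction p using List.twoStepInduction <;> simp_all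

lemma isChain_iff_forall_mem_pathEdges {p : List V} :
    p.IsChain D ↔ ∀ e ∈ pathEdges p, D e.1 e.2 := by
  induction p using List.twoStepInduction <;> simp_all

lemma isPath_iff_isChain {p : List V} : IsPath D p ↔ p.Nodup ∧ 2 ≤ p.length ∧ p.IsChain D := by
  rw [IsPath, isChain_iff_forall_mem_pathEdges]

lemma IsPath.ne_nil {p : List V} (hp : IsPath D p) : p ≠ [] :=
  List.ne_nil_of_length_pos (by have := hp.2.1; omega)

lemma IsPath.reverse {p : List V} (hp : IsPath D p) : IsPath (flip D) p.reverse := by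
  rw [isPath_iff_isChain] at hp ⊢
  exact ⟨List.nodup_reverse.2 hp.1, by simpa using hp.2.1, List.isChain_reverse.2 hp.2.2⟩

lemma Acyclic.flip (hac : Acyclic D) : Acyclic (flip D) := by
  intro v c hc
  have hcycle : (v :: (c ++ [v])).reverse.IsChain D := List.isChain_reverse.2 hc
  simp only [List.reverse_cons, List.reverse_append] at hcycle
  exact hac v c.reverse hcycle

def IsLongestPath (D : V → V → Prop) (p : List V) : Prop :=
  IsPath D p ∧ ∀ q : List V, IsPath D q → q.length ≤ p.length

lemma IsPath.cons {u a : V} {l : List V} (hp : IsPath D (a :: l)) (hu : u ∉ a :: l) (h : D u a) :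
    IsPath D (u :: a :: l) := by
  rw [isPath_iff_isChain] at hp ⊢
  exact ⟨List.nodup_cons.2 ⟨hu, hp.1⟩, by simp, List.IsChain.cons_cons h hp.2.2⟩

lemma IsLongestPath.reverse {p : List V} (hp : IsLongestPath D p) :
    IsLongestPath (flip D) p.reverse :=
  ⟨hp.1.reverse, fun q hq => by simpa using hp.2 q.reverse hq.reverse⟩

lemma Acyclic.not_mem_of_isChain_cons (hac : Acyclic D) {u a : V} {l : List V}
    (hl : (a :: l).IsChain D) (h : D u a) : u ∉ a :: l := by
  intro hu
  obtain ⟨s, t, hst⟩ := List.append_of_mem hu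
  have hs : (s ++ [u]).IsChain D := (hst ▸ hl).prefix ⟨t, by simp⟩
  cases s with
  | nil =>
    obtain ⟨rfl, -⟩ : a = u ∧ l = t := by simpa using hst
    exact hac a [] (List.isChain_pair.2 h)
  | cons x s =>
    obtain ⟨rfl, -⟩ := List.cons_eq_cons.1 hst
    have hcycle : ((a :: s) ++ [u, a]).IsChain D :=
      List.isChain_append_cons_cons.2 ⟨hs, h, List.isChain_singleton a⟩
    exact hac a (s ++ [u]) (by rw [List.append_assoc]; exact hcycle)

lemma Acyclic.not_rel_head (hac : Acyclic D) {p : List V} (hp : IsLongestPath D p) (u : V) :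
    ¬ D u (p.head hp.1.ne_nil) := by
  obtain ⟨a, l, rfl⟩ := List.exists_cons_of_ne_nil hp.1.ne_nil
  intro h
  have hu := hac.not_mem_of_isChain_cons (isPath_iff_isChain.1 hp.1).2.2 h
  have := hp.2 _ (hp.1.cons hu h)
  simp at this

lemma Acyclic.not_rel_getLast (hac : Acyclic D) {p : List V} (hp : IsLongestPath D p) (w : V) :
    ¬ D (p.getLast hp.1.ne_nil) w := by
  have h := hac.flip.not_rel_head hp.reverse w
  simp only [List.head_reverse] at h
  exact h

def deleteEdges (D : V → V → Prop) (E : List (V × V)) : V → V → Prop :=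
  fun u w => D u w ∧ (u, w) ∉ E

lemma deleteEdges_flip (D : V → V → Prop) (E : List (V × V)) :
    deleteEdges (flip D) (E.map Prod.swap) = flip (deleteEdges D E) := by
  ext u w
  simp [deleteEdges, flip]

lemma outDeg_eq_outDeg_deleteEdges_add_ncard [Finite V] {E : List (V × V)}
    (hED : ∀ e ∈ E, D e.1 e.2) (v : V) :
    outDeg D v = outDeg (deleteEdges D E) v + {w | (v, w) ∈ E}.ncard := by
  have hsplit : {w | D v w} = {w | deleteEdges D E v w} ∪ {w | (v, w) ∈ E} := by
    ext w
    by_cases h : (v, w) ∈ E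
    · simp [deleteEdges, h, hED _ h]
    · simp [deleteEdges, h]
  have hdisj : Disjoint {w | deleteEdges D E v w} {w | (v, w) ∈ E} :=
    Set.disjoint_left.2 fun _ hw hw' => hw.2 hw'
  change Set.ncard {w | D v w} = _
  rw [hsplit, Set.ncard_union_eq hdisj]
  rfl

lemma inDeg_eq_inDeg_deleteEdges_add_ncard [Finite V] {E : List (V × V)}
    (hED : ∀ e ∈ E, D e.1 e.2) (v : V) :
    inDeg D v = inDeg (deleteEdges D E) v + {u | (u, v) ∈ E}.ncard := by
  have h := outDeg_eq_outDeg_deleteEdges_add_ncard (D := flip D) (E := E.map Prod.swap)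
    (fun ⟨a, b⟩ he => hED (b, a) ((List.mem_map_swap b a E).1 he)) v
  rw [deleteEdges_flip] at h
  simp only [List.mem_map_swap] at h
  exact h

open Classical in
lemma ncard_setOf_mem_eq_ite {E : List (V × V)} (hE : (E.map Prod.fst).Nodup) (v : V) :
    {w | (v, w) ∈ E}.ncard = if v ∈ E.map Prod.fst then 1 else 0 := by
  split_ifs with hv
  · obtain ⟨⟨v, w⟩, hw, rfl⟩ := List.mem_map.1 hv
    refine Set.ncard_eq_one.2 ⟨w, Set.eq_singleton_iff_unique_mem.2 ⟨hw, fun w' hw' => ?_⟩⟩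
    exact congrArg Prod.snd (List.inj_on_of_nodup_map hE hw' hw rfl)
  · convert Set.ncard_empty V
    ext w
    simpa using fun hw => hv (List.mem_map.2 ⟨_, hw, rfl⟩)

open Classical in
lemma ncard_setOf_mem_pathEdges_left {p : List V} (hp : p.Nodup) (v : V) :
    {w | (v, w) ∈ pathEdges p}.ncard = if v ∈ p.dropLast then 1 else 0 := by
  have hnd : ((pathEdges p).map Prod.fst).Nodup := by
    rw [map_fst_pathEdges]
    exact (List.dropLast_sublist p).nodup hp
  rw [ncard_setOf_mem_eq_ite hnd, map_fst_pathEdges]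

open Classical in
lemma ncard_setOf_mem_pathEdges_right {p : List V} (hp : p.Nodup) (v : V) :
    {u | (u, v) ∈ pathEdges p}.ncard = if v ∈ p.tail then 1 else 0 := by
  have hmap : ((pathEdges p).map Prod.swap).map Prod.fst = p.tail := by
    rw [List.map_map]
    exact map_snd_pathEdges p
  have h := ncard_setOf_mem_eq_ite (hmap ▸ (List.tail_sublist p).nodup hp) v
  simp only [hmap, List.mem_map_swap] at h
  exact h

lemma exPlus_deleteEdges_pathEdges_head [Finite V] {p : List V} (hp : IsPath D p)
    (hsrc : ∀ u, ¬ D u (p.head hp.ne_nil)) :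
    exPlus (deleteEdges D (pathEdges p)) (p.head hp.ne_nil) + 1 = exPlus D (p.head hp.ne_nil) := by
  obtain ⟨hnd, hlen, hpe⟩ := hp
  obtain ⟨a, b, l, rfl⟩ : ∃ a b l, p = a :: b :: l := by
    match p, hlen with
    | a :: b :: l, _ => exact ⟨a, b, l, rfl⟩
  have hout := outDeg_eq_outDeg_deleteEdges_add_ncard hpe a
  have hin := inDeg_eq_inDeg_deleteEdges_add_ncard hpe a
  have hsource : inDeg D a = 0 := Nat.card_eq_zero.2 (.inl ⟨fun u => hsrc u.1 u.2⟩)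
  have ha : a ∉ (a :: b :: l).tail := (List.nodup_cons.1 hnd).1
  rw [ncard_setOf_mem_pathEdges_left hnd, if_pos (by simp)] at hout
  rw [ncard_setOf_mem_pathEdges_right hnd, if_neg ha] at hin
  simp only [List.head_cons, exPlus, exInt]
  omega

lemma exPlus_deleteEdges_pathEdges_of_ne_head [Finite V] {p : List V} (hp : IsPath D p)
    (hsink : ∀ w, ¬ D (p.getLast hp.ne_nil) w) {v : V} (hv : v ≠ p.head hp.ne_nil) :
    exPlus (deleteEdges D (pathEdges p)) v = exPlus D v := by
  have hout := outDeg_eq_outDeg_deleteEdges_add_ncard hp.2.2 v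
  have hin := inDeg_eq_inDeg_deleteEdges_add_ncard hp.2.2 v
  rw [ncard_setOf_mem_pathEdges_left hp.1] at hout
  rw [ncard_setOf_mem_pathEdges_right hp.1] at hin
  simp only [exPlus, exInt]
  by_cases hvz : v = p.getLast hp.ne_nil
  · -- `v` keeps out-degree `0`, so its excess is `≤ 0` in both digraphs
    have hsink' : outDeg D v = 0 := Nat.card_eq_zero.2 (.inl ⟨fun w => hsink w.1 (hvz ▸ w.2)⟩)
    omega
  · obtain ⟨a, l, rfl⟩ := List.exists_cons_of_ne_nil hp.ne_nil
    have hmem : v ∈ (a :: l).dropLast ↔ v ∈ (a :: l).tail := by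
      rw [List.head_cons] at hv
      constructor
      · exact fun h => (List.mem_cons.1 (List.mem_of_mem_dropLast h)).resolve_left hv
      · exact fun h => List.mem_dropLast_of_mem_of_ne_getLast (List.mem_cons_of_mem a h) hvz
    by_cases h : v ∈ (a :: l).tail
    · rw [if_pos (hmem.2 h)] at hout
      rw [if_pos h] at hin
      omega
    · rw [if_neg (mt hmem.1 h)] at hout
      rw [if_neg h] at hin
      omega

lemma exD_deleteEdges_pathEdges_add_one [Fintype V] {p : List V} (hp : IsPath D p)
    (hsrc : ∀ u, ¬ D u (p.head hp.ne_nil)) (hsink : ∀ w, ¬ D (p.getLast hp.ne_nil) w) :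
    exD (deleteEdges D (pathEdges p)) + 1 = exD D := by
  classical
  set a := p.head hp.ne_nil
  rw [exD, exD, ← Finset.add_sum_erase _ _ (Finset.mem_univ a),
    ← Finset.add_sum_erase _ _ (Finset.mem_univ a), ← exPlus_deleteEdges_pathEdges_head hp hsrc,
    Finset.sum_congr rfl fun v hv =>
      exPlus_deleteEdges_pathEdges_of_ne_head hp hsink (Finset.ne_of_mem_erase hv)]
  ring

theorem remove_longest_path_excess_general {V : Type*} [Fintype V] (D : V → V → Prop)
    (hac : Acyclic D) (p : List V) (hp : IsPath D p)
    (hmax : ∀ q : List V, IsPath D q → q.length ≤ p.length) :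
    exD (fun u w => D u w ∧ (u, w) ∉ pathEdges p) + 1 = exD D :=
  exD_deleteEdges_pathEdges_add_one hp (hac.not_rel_head ⟨hp, hmax⟩)
    (hac.not_rel_getLast ⟨hp, hmax⟩)

/-- Removing a directed path of maximum length from a nonempty acyclic digraph
decreases the excess by exactly one. -/
theorem remove_longest_path_excess {V : Type*} [Fintype V] (D : V → V → Prop)
    (hac : Acyclic D) (hne : ∃ u w, D u w) (p : List V) (hp : IsPath D p)
    (hmax : ∀ q : List V, IsPath D q → q.length ≤ p.length) :
    exD (fun u w => D u w ∧ (u, w) ∉ pathEdges p) + 1 = exD D :=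
  remove_longest_path_excess_general D hac p hp hmax
end

section
/- Let G be a bipartite graph with vertex classes A and B and let k ∈ ℕ. If k·|N_G(X)| ≥ |X| for every X ⊆ A, then there exists a subgraph G′ ⊆ G in which every vertex of A has degree 1 and every vertex of B has degree at most k. -/
/-- variant of Hall's theorem. If `G` is a bipartite graph with classes `A`
and `B` and `k·|N_G(X)| ≥ |X|` for every `X ⊆ A`, then there is a subgraph in which every
vertex of `A` has degree `1` and every vertex of `B` has degree at most `k`, i.e. each `a ∈ A`
can be matched along an edge of `G` to some `b ∈ B` with each `b` used at most `k` times. -/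
theorem hall_variant {A B : Type*} [Fintype A] [Fintype B] (G : A → B → Prop) (k : ℕ)
    (hHall : ∀ X : Finset A, X.card ≤ k * Nat.card {b // ∃ a ∈ X, G a b}) :
    ∃ f : A → B, (∀ a, G a (f a)) ∧ ∀ b : B, Nat.card {a // f a = b} ≤ k := by
  classical
  rcases Nat.eq_zero_or_pos k with hk | hk
  · -- k = 0 forces A empty
    have hA : IsEmpty A := by
      constructor
      intro a
      have := hHall {a}
      simp [hk] at this
    refine ⟨fun a => (hA.false a).elim, fun a => (hA.false a).elim, fun b => ?_⟩
    simp [Nat.card_of_isEmpty]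
  · -- k > 0: apply Hall to t : A → Finset (B × Fin k)
    obtain ⟨i0⟩ : Nonempty (Fin k) := ⟨⟨0, hk⟩⟩
    set t : A → Finset (B × Fin k) := fun a => Finset.univ.filter (fun p => G a p.1) with ht
    have hall : ∀ X : Finset A, X.card ≤ (X.biUnion t).card := by
      intro X
      have key : X.biUnion t = (Finset.univ.filter (fun b => ∃ a ∈ X, G a b)) ×ˢ Finset.univ := by
        ext ⟨b, i⟩
        simp [ht]
      have hcard : (X.biUnion t).card = (Finset.univ.filter (fun b => ∃ a ∈ X, G a b)).card * k := by
        rw [key, Finset.card_product, Finset.card_univ, Fintype.card_fin]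
      have hN : Nat.card {b // ∃ a ∈ X, G a b}
          = (Finset.univ.filter (fun b => ∃ a ∈ X, G a b)).card := by
        rw [Nat.card_eq_fintype_card, Fintype.card_subtype]
      calc X.card ≤ k * Nat.card {b // ∃ a ∈ X, G a b} := hHall X
        _ = (X.biUnion t).card := by rw [hN, hcard, Nat.mul_comm]
    obtain ⟨F, hFinj, hFt⟩ :=
      (Finset.all_card_le_biUnion_card_iff_exists_injective t).mp hall
    refine ⟨fun a => (F a).1, fun a => ?_, fun b => ?_⟩
    · have := hFt a
      simp [ht] at this
      exact this
    · -- fiber of b injects into Fin k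
      have : Nat.card {a // (F a).1 = b} ≤ Nat.card (Fin k) := by
        apply Nat.card_le_card_of_injective (fun x => (F x.1).2)
        intro x y hxy
        have : F x.1 = F y.1 := Prod.ext (x.2.trans y.2.symm) hxy
        exact Subtype.ext (hFinj this)
      simpa using this
end

section
/- Suppose D is a digraph, and H ⊆ D is a subdigraph such that ex⁺_H(v) ≤ ex⁺_D(v) and ex⁻_H(v) ≤ ex⁻_D(v) for all v ∈ V(D). Then ex(D) = ex(H) + ex(D − H), where D − H is obtained by deleting the edges of H from D. -/
open Finset

variable {V : Type*}

lemma card_split {V : Type*} [Fintype V] (P Q : V → Prop) (h : ∀ u, Q u → P u) :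
    Nat.card {u // P u} = Nat.card {u // Q u} + Nat.card {u // P u ∧ ¬ Q u} := by
  classical
  simp only [Nat.card_eq_fintype_card, Fintype.card_subtype]
  rw [← Finset.card_union_of_disjoint (by simp [Finset.disjoint_left]; tauto)]
  congr 1; ext u; simp; tauto

/-- If `H ⊆ D` and `ex⁺_H(v) ≤ ex⁺_D(v)`, `ex⁻_H(v) ≤ ex⁻_D(v)` for all `v`,
then `ex(D) = ex(H) + ex(D − H)`. -/
theorem excess_additive {V : Type*} [Fintype V] (D H : V → V → Prop)
    (hsub : ∀ u v, H u v → D u v)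
    (hex : ∀ v, exPlus H v ≤ exPlus D v ∧ exMinus H v ≤ exMinus D v) :
    exD D = exD H + exD (fun u v => D u v ∧ ¬ H u v) := by
  unfold exD
  rw [← Finset.sum_add_distrib]
  apply Finset.sum_congr rfl
  intro v _
  have hout : outDeg D v = outDeg H v + outDeg (fun u v => D u v ∧ ¬ H u v) v :=
    card_split (D v) (H v) (hsub v)
  have hin : inDeg D v = inDeg H v + inDeg (fun u v => D u v ∧ ¬ H u v) v :=
    card_split (fun u => D u v) (fun u => H u v) (fun u => hsub u v)
  have hEx : exInt D v = exInt H v + exInt (fun u v => D u v ∧ ¬ H u v) v := by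
    unfold exInt; rw [hout, hin]; push_cast; ring
  obtain ⟨h1, h2⟩ := hex v
  unfold exPlus exMinus at *
  omega
end

section
/- Let D be a digraph with a partition V(D) = A⁺ ∪ A⁻ ∪ R such that there are no edges from R to A⁺, no edges from A⁻ to R, and no edges within A⁺ ∪ A⁻. Suppose additionally that ex_D(v) ≥ 0 for every out-neighbour v of a vertex in A⁺, ex_D(v) ≤ 0 for every in-neighbour v of a vertex in A⁻, and N⁺_D(A⁺) ∩ N⁻_D(A⁻) = ∅. Then ex(D[R]) = ex(D). -/
open Finset

variable {V : Type*}

open Classical in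
lemma outDeg_card {V : Type*} [Fintype V] (D : V → V → Prop) (v : V) :
    outDeg D v = (univ.filter (fun u => D v u)).card := by
  rw [outDeg, Nat.card_eq_fintype_card, Fintype.card_subtype]

open Classical in
lemma inDeg_card {V : Type*} [Fintype V] (D : V → V → Prop) (v : V) :
    inDeg D v = (univ.filter (fun u => D u v)).card := by
  rw [inDeg, Nat.card_eq_fintype_card, Fintype.card_subtype]

/-- Let `D` have a vertex partition `A⁺ ∪ A⁻ ∪ R` with no edges from `R` to
`A⁺`, none from `A⁻` to `R`, and none inside `A⁺ ∪ A⁻`. If moreover every out-neighbour of `A⁺`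
has nonnegative excess, every in-neighbour of `A⁻` has nonpositive excess, and
`N⁺(A⁺) ∩ N⁻(A⁻) = ∅`, then `ex(D[R]) = ex(D)`. -/
theorem excess_induced_eq {V : Type*} [Fintype V] (D : V → V → Prop)
    (Ap Am R : Set V)
    (hpart : ∀ v : V, (v ∈ Ap ∧ v ∉ Am ∧ v ∉ R) ∨ (v ∉ Ap ∧ v ∈ Am ∧ v ∉ R) ∨
      (v ∉ Ap ∧ v ∉ Am ∧ v ∈ R))
    (hRA : ∀ u ∈ R, ∀ a ∈ Ap, ¬ D u a)
    (hAR : ∀ a ∈ Am, ∀ u ∈ R, ¬ D a u)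
    (hAA : ∀ u ∈ Ap ∪ Am, ∀ w ∈ Ap ∪ Am, ¬ D u w)
    (hNp : ∀ a ∈ Ap, ∀ v : V, D a v → 0 ≤ exInt D v)
    (hNm : ∀ a ∈ Am, ∀ v : V, D v a → exInt D v ≤ 0)
    (hdisj : ∀ v : V, ¬ ((∃ a ∈ Ap, D a v) ∧ (∃ a ∈ Am, D v a))) :
    exD (fun u v => D u v ∧ u ∈ R ∧ v ∈ R) = exD D := by
  
  classical
  set DR : V → V → Prop := fun u v => D u v ∧ u ∈ R ∧ v ∈ R with hDRdef
  set p : V → ℕ := fun v => (univ.filter (fun a => D a v ∧ a ∉ R)).card with hpdef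
  set m : V → ℕ := fun v => (univ.filter (fun u => D v u ∧ u ∉ R)).card with hmdef
  set q : V → ℕ := fun v => if v ∈ R then 0 else outDeg D v with hqdef
  -- edges with an endpoint outside R are between A's and R appropriately
  have hnotR : ∀ v : V, v ∉ R → v ∈ Ap ∪ Am := by
    intro v hv
    rcases hpart v with ⟨h1,_,_⟩ | ⟨_,h2,_⟩ | ⟨_,_,h3⟩
    · exact Or.inl h1
    · exact Or.inr h2
    · exact absurd h3 hv
  have hp0 : ∀ v : V, v ∉ R → p v = 0 := by
    intro v hv
    rw [hpdef]
    simp only [Finset.card_eq_zero, Finset.filter_eq_empty_iff]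
    rintro a _ ⟨hDav, haR⟩
    exact hAA a (hnotR a haR) v (hnotR v hv) hDav
  -- exPlus of DR vanishes off R
  have hDRoff : ∀ v : V, v ∉ R → exPlus DR v = 0 := by
    intro v hv
    have ho : outDeg DR v = 0 := by
      rw [outDeg_card]
      simp only [Finset.card_eq_zero, Finset.filter_eq_empty_iff]
      rintro u _ ⟨-, hvR, -⟩
      exact hv hvR
    have hi : inDeg DR v = 0 := by
      rw [inDeg_card]
      simp only [Finset.card_eq_zero, Finset.filter_eq_empty_iff]
      rintro u _ ⟨-, -, hvR⟩
      exact hv hvR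
    simp [exPlus, exInt, ho, hi]
  -- degree splits for v ∈ R
  have houtsplit : ∀ v ∈ R, outDeg D v = outDeg DR v + m v := by
    intro v hv
    rw [outDeg_card D v, outDeg_card DR v]
    have h := Finset.card_filter_add_card_filter_not
      (s := univ.filter (fun u => D v u)) (p := fun u => u ∈ R)
    rw [Finset.filter_filter, Finset.filter_filter] at h
    have h1 : univ.filter (fun u => D v u ∧ u ∈ R) = univ.filter (fun u => DR v u) := by
      apply Finset.filter_congr
      intro u _
      constructor
      · rintro ⟨h1, h2⟩; exact ⟨h1, hv, h2⟩
      · rintro ⟨h1, -, h2⟩; exact ⟨h1, h2⟩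
    rw [h1] at h
    have hm2 : m v = #(filter (fun a => D v a ∧ a ∉ R) univ) := rfl
    rw [hm2]
    convert h.symm using 3
    congr!
  have hinsplit : ∀ v ∈ R, inDeg D v = inDeg DR v + p v := by
    intro v hv
    rw [inDeg_card D v, inDeg_card DR v]
    have h := Finset.card_filter_add_card_filter_not
      (s := univ.filter (fun u => D u v)) (p := fun u => u ∈ R)
    rw [Finset.filter_filter, Finset.filter_filter] at h
    have h1 : univ.filter (fun u => D u v ∧ u ∈ R) = univ.filter (fun u => DR u v) := by
      apply Finset.filter_congr
      intro u _
      constructor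
      · rintro ⟨h1, h2⟩; exact ⟨h1, h2, hv⟩
      · rintro ⟨h1, h2, -⟩; exact ⟨h1, h2⟩
    rw [h1] at h
    have hp2 : p v = #(filter (fun a => D a v ∧ a ∉ R) univ) := rfl
    rw [hp2]
    convert h.symm using 3
    congr!
  -- key per-vertex identity
  have hkey : ∀ v : V, (exPlus D v : ℤ) + p v = (exPlus DR v : ℤ) + q v := by
    intro v
    by_cases hvR : v ∈ R
    · -- v ∈ R : q v = 0
      have hq0 : q v = 0 := by simp [hqdef, hvR]
      have hEx : exInt D v = exInt DR v + m v - p v := by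
        unfold exInt
        rw [houtsplit v hvR, hinsplit v hvR]
        push_cast
        ring
      rw [hq0]
      by_cases hpv : p v = 0
      · rw [hpv]
        by_cases hmv : m v = 0
        · have : exInt D v = exInt DR v := by rw [hEx, hpv, hmv]; push_cast; ring
          simp [exPlus, this]
        · -- m v > 0: there is u ∉ R with D v u, so u ∈ Am
          have : (univ.filter (fun u => D v u ∧ u ∉ R)).Nonempty := by
            rw [← Finset.card_pos]
            have : 0 < m v := Nat.pos_of_ne_zero hmv
            rwa [hmdef] at this
          obtain ⟨u, hu⟩ := this
          simp only [Finset.mem_filter] at hu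
          obtain ⟨-, hDvu, huR⟩ := hu
          have huAm : u ∈ Am := by
            rcases hnotR u huR with h | h
            · exact absurd hDvu (hRA v hvR u h)
            · exact h
          have hle : exInt D v ≤ 0 := hNm u huAm v hDvu
          have hle2 : exInt DR v ≤ 0 := by
            have : (0:ℤ) ≤ m v := Int.natCast_nonneg _
            omega
          have e1 : exPlus D v = 0 := by
            simp [exPlus, Int.toNat_eq_zero]; omega
          have e2 : exPlus DR v = 0 := by
            simp [exPlus, Int.toNat_eq_zero]; omega
          simp [e1, e2]
      · -- p v > 0: there is a ∉ R with D a v, so a ∈ Ap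
        have : (univ.filter (fun a => D a v ∧ a ∉ R)).Nonempty := by
          rw [← Finset.card_pos]
          have : 0 < p v := Nat.pos_of_ne_zero hpv
          rwa [hpdef] at this
        obtain ⟨a, ha⟩ := this
        simp only [Finset.mem_filter] at ha
        obtain ⟨-, hDav, haR⟩ := ha
        have haAp : a ∈ Ap := by
          rcases hnotR a haR with h | h
          · exact h
          · exact absurd hDav (hAR a h v hvR)
        have hge : 0 ≤ exInt D v := hNp a haAp v hDav
        have hmv : m v = 0 := by
          by_contra hmv
          have : (univ.filter (fun u => D v u ∧ u ∉ R)).Nonempty := by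
            rw [← Finset.card_pos]
            have : 0 < m v := Nat.pos_of_ne_zero hmv
            rwa [hmdef] at this
          obtain ⟨u, hu⟩ := this
          simp only [Finset.mem_filter] at hu
          obtain ⟨-, hDvu, huR⟩ := hu
          have huAm : u ∈ Am := by
            rcases hnotR u huR with h | h
            · exact absurd hDvu (hRA v hvR u h)
            · exact h
          exact hdisj v ⟨⟨a, haAp, hDav⟩, ⟨u, huAm, hDvu⟩⟩
        have hEx2 : exInt DR v = exInt D v + p v := by
          rw [hEx, hmv]; push_cast; ring
        have e1 : (exPlus D v : ℤ) = exInt D v := by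
          simp [exPlus, Int.toNat_of_nonneg hge]
        have e2 : (exPlus DR v : ℤ) = exInt DR v := by
          have : 0 ≤ exInt DR v := by
            rw [hEx2]; have : (0:ℤ) ≤ p v := Int.natCast_nonneg _; omega
          simp [exPlus, Int.toNat_of_nonneg this]
        rw [e1, e2, hEx2]; ring
    · -- v ∉ R
      rcases hnotR v hvR with hvAp | hvAm
      · -- v ∈ Ap : inDeg D v = 0
        have hi : inDeg D v = 0 := by
          rw [inDeg_card]
          simp only [Finset.card_eq_zero, Finset.filter_eq_empty_iff]
          intro a _
          intro hDav
          by_cases haR : a ∈ R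
          · exact hRA a haR v hvAp hDav
          · exact hAA a (hnotR a haR) v (Or.inl hvAp) hDav
        have e1 : exPlus D v = outDeg D v := by
          simp [exPlus, exInt, hi]
        rw [e1, hDRoff v hvR, hp0 v hvR]
        simp [hqdef, hvR]
      · -- v ∈ Am : outDeg D v = 0
        have ho : outDeg D v = 0 := by
          rw [outDeg_card]
          simp only [Finset.card_eq_zero, Finset.filter_eq_empty_iff]
          intro u _
          intro hDvu
          by_cases huR : u ∈ R
          · exact hAR v hvAm u huR hDvu
          · exact hAA v (Or.inr hvAm) u (hnotR u huR) hDvu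
        have e1 : exPlus D v = 0 := by
          simp [exPlus, exInt, ho, Int.toNat_eq_zero]
        rw [e1, hDRoff v hvR, hp0 v hvR]
        simp [hqdef, hvR, ho]
  -- double counting: ∑ p = ∑ q
  have hsum : ∑ v, p v = ∑ v, q v := by
    have h1 : ∑ v, p v = ∑ a, ∑ v, (if D a v ∧ a ∉ R then 1 else 0) := by
      simp only [hpdef, Finset.card_filter]
      exact Finset.sum_comm
    rw [h1]
    refine Finset.sum_congr rfl fun a _ => ?_
    by_cases haR : a ∈ R
    · simp [hqdef, haR]
    · rw [hqdef]
      simp only [haR, if_false, outDeg_card, Finset.card_filter]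
      refine Finset.sum_congr rfl fun v _ => ?_
      simp [haR]
  -- conclude
  have hfin : (∑ v, (exPlus DR v : ℤ)) = ∑ v, (exPlus D v : ℤ) := by
    have h1 : ∑ v, ((exPlus D v : ℤ) + p v) = ∑ v, ((exPlus DR v : ℤ) + q v) :=
      Finset.sum_congr rfl fun v _ => hkey v
    rw [Finset.sum_add_distrib, Finset.sum_add_distrib] at h1
    have h2 : (∑ v, (p v : ℤ)) = ∑ v, (q v : ℤ) := by exact_mod_cast hsum
    omega
  have : (exD DR : ℤ) = exD D := by
    unfold exD
    push_cast
    exact hfin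
  exact_mod_cast this
end

section
/- Let D be an Eulerian digraph on n vertices with m edges obtained by iteratively removing a longest cycle; if every Eulerian digraph with r edges on n vertices contains a cycle of length more than r/(24 n^{4/3}), then after at most 50 n^{4/3} log n iterations no edges remain. Consequently, every Eulerian oriented graph on n vertices can be decomposed into at most 50 n^{4/3} log n cycles. -/
open Finset

variable {V : Type*}

/-- The edge list of a closed cycle given by its vertex list. -/
def cycEdges (c : List V) : List (V × V) := c.zip (c.rotate 1)

/-- A directed cycle of `D`, given by its list of (distinct) vertices. -/
def IsCycle (D : V → V → Prop) (c : List V) : Prop :=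
  2 ≤ c.length ∧ c.Nodup ∧ ∀ e ∈ cycEdges c, D e.1 e.2

/-- A decomposition of the edge set of `D` into cycles. -/
def IsCycleDecomp (D : V → V → Prop) (Cs : List (List V)) : Prop :=
  (∀ c ∈ Cs, IsCycle D c) ∧ ((Cs.map cycEdges).flatten.Nodup) ∧
    ∀ u v : V, D u v ↔ (u, v) ∈ (Cs.map cycEdges).flatten

/-- The number of edges of a digraph. -/
noncomputable def numEdges (D : V → V → Prop) : ℕ := Nat.card {e : V × V // D e.1 e.2}


/-! Deleting the edges of a cycle from an Eulerian oriented graph leaves an Eulerian oriented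
graph, because a cycle is itself Eulerian. If the cycle carries more than `m / C` of the `m`
edges, the `m'` remaining edges satisfy `log m - log m' ≥ 1 - m'/m > 1/C`, so greedily removing
such cycles uses at most `1 + C log m` of them. With `C = 24 n^{4/3}` and `m ≤ n²` this is at
most `50 n^{4/3} log n`. -/

def IsOriented (D : V → V → Prop) : Prop := ∀ u v, D u v → ¬ D v u

def IsEulerian (D : V → V → Prop) : Prop := ∀ v, outDeg D v = inDeg D v

def cycleDigraph (c : List V) : V → V → Prop := fun u v => (u, v) ∈ cycEdges c

theorem Nat.card_subtype_and_not_add_card {α : Type*} [Finite α] {p q : α → Prop}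
    (h : q ≤ p) : Nat.card {a // p a ∧ ¬ q a} + Nat.card {a // q a} = Nat.card {a // p a} := by
  have := Set.ncard_sdiff_add_ncard_of_subset (s := {a | q a}) (t := {a | p a}) h
  rwa [← Nat.card_coe_set_eq, ← Nat.card_coe_set_eq, ← Nat.card_coe_set_eq] at this

open Classical in
theorem Nat.card_fiber_of_nodup_map_fst {α β : Type*} {L : List (α × β)}
    (h : (L.map Prod.fst).Nodup) (a : α) :
    Nat.card {b // (a, b) ∈ L} = if a ∈ L.map Prod.fst then 1 else 0 := by
  split_ifs with ha
  · obtain ⟨⟨a', b⟩, hab, rfl⟩ := List.mem_map.mp ha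
    exact Nat.card_eq_one_iff_exists.mpr
      ⟨⟨b, hab⟩, fun ⟨b', hb'⟩ => Subtype.ext (congrArg Prod.snd
        (List.inj_on_of_nodup_map h hb' hab rfl))⟩
  · exact Nat.card_eq_zero.mpr (Or.inl ⟨fun ⟨b, hb⟩ => ha (List.mem_map_of_mem hb)⟩)

section Digraph

variable {D E : V → V → Prop}

theorem outDeg_sdiff_add [Finite V] (h : E ≤ D) (v : V) :
    outDeg (D \ E) v + outDeg E v = outDeg D v :=
  Nat.card_subtype_and_not_add_card (h v)

theorem inDeg_sdiff_add [Finite V] (h : E ≤ D) (v : V) :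
    inDeg (D \ E) v + inDeg E v = inDeg D v :=
  Nat.card_subtype_and_not_add_card fun u => h u v

theorem numEdges_sdiff_add [Finite V] (h : E ≤ D) :
    numEdges (D \ E) + numEdges E = numEdges D :=
  Nat.card_subtype_and_not_add_card fun e => h e.1 e.2

theorem numEdges_eq_zero_iff [Finite V] : numEdges D = 0 ↔ ∀ u v, ¬ D u v := by
  simp [numEdges, Nat.card_eq_zero, isEmpty_subtype, not_infinite_iff_finite.mpr]

theorem IsOriented.mono (hD : IsOriented D) (h : E ≤ D) : IsOriented E :=
  fun u v huv hvu => hD u v (h u v huv) (h v u hvu)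

theorem IsEulerian.sdiff [Finite V] (hD : IsEulerian D) (hE : IsEulerian E) (h : E ≤ D) :
    IsEulerian (D \ E) := fun v => by
  linarith [outDeg_sdiff_add h v, inDeg_sdiff_add h v, hD v, hE v]

end Digraph

section Cycle

variable {c : List V}

theorem cycEdges_map_fst (c : List V) : (cycEdges c).map Prod.fst = c := by
  simp [cycEdges, List.map_fst_zip]

theorem cycEdges_map_snd (c : List V) : (cycEdges c).map Prod.snd = c.rotate 1 := by
  simp [cycEdges, List.map_snd_zip]

theorem cycEdges_nodup (hc : c.Nodup) : (cycEdges c).Nodup :=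
  List.Nodup.of_map Prod.fst (by rwa [cycEdges_map_fst])

open Classical in
theorem outDeg_cycleDigraph (hc : c.Nodup) (v : V) :
    outDeg (cycleDigraph c) v = if v ∈ c then 1 else 0 := by
  have := Nat.card_fiber_of_nodup_map_fst (L := cycEdges c) (by rwa [cycEdges_map_fst]) v
  rwa [cycEdges_map_fst] at this

open Classical in
theorem inDeg_cycleDigraph (hc : c.Nodup) (v : V) :
    inDeg (cycleDigraph c) v = if v ∈ c then 1 else 0 := by
  have hswap : ((cycEdges c).map Prod.swap).map Prod.fst = c.rotate 1 := by
    simp [Function.comp_def, ← cycEdges_map_snd]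
  show Nat.card {u // (u, v) ∈ cycEdges c} = _
  rw [Nat.card_congr (Equiv.subtypeEquivRight fun u => (List.mem_map_swap u v _).symm),
    Nat.card_fiber_of_nodup_map_fst (by rwa [hswap, List.nodup_rotate]) v, hswap]
  simp only [List.mem_rotate]

theorem isEulerian_cycleDigraph (hc : c.Nodup) : IsEulerian (cycleDigraph c) := fun v => by
  rw [outDeg_cycleDigraph hc, inDeg_cycleDigraph hc]

theorem numEdges_cycleDigraph (hc : c.Nodup) : numEdges (cycleDigraph c) = c.length := by
  classical
  conv_rhs => rw [← cycEdges_map_fst c, List.length_map,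
    ← List.toFinset_card_of_nodup (cycEdges_nodup hc), ← Nat.card_eq_finsetCard]
  simp [numEdges, cycleDigraph]

theorem IsCycle.cycleDigraph_le {D : V → V → Prop} (hc : IsCycle D c) : cycleDigraph c ≤ D :=
  fun u v h => hc.2.2 (u, v) h

end Cycle

theorem isCycleDecomp_nil {D : V → V → Prop} (hD : ∀ u v, ¬ D u v) : IsCycleDecomp D [] :=
  ⟨by simp, by simp, by simpa using hD⟩

theorem IsCycleDecomp.cons {D : V → V → Prop} {c : List V} {Cs : List (List V)}
    (hc : IsCycle D c) (hCs : IsCycleDecomp (D \ cycleDigraph c) Cs) :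
    IsCycleDecomp D (c :: Cs) := by
  obtain ⟨hcycles, hnodup, hedges⟩ := hCs
  refine ⟨?_, ?_, fun u v => ?_⟩
  · intro c' hc'
    rcases List.mem_cons.mp hc' with rfl | hc'
    · exact hc
    · obtain ⟨hlen, hc'nodup, hc'edges⟩ := hcycles c' hc'
      exact ⟨hlen, hc'nodup, fun e he => (hc'edges e he).1⟩
  · refine List.nodup_append.mpr ⟨cycEdges_nodup hc.2.1, hnodup, ?_⟩
    rintro e he _ he' rfl
    exact ((hedges e.1 e.2).mpr he').2 he
  · simp only [List.map_cons, List.flatten_cons, List.mem_append, ← hedges]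
    by_cases h : (u, v) ∈ cycEdges c
    · exact ⟨fun _ => Or.inl h, fun _ => hc.cycleDigraph_le u v h⟩
    · exact ⟨fun huv => Or.inr ⟨huv, h⟩, fun h' => h'.resolve_left h |>.1⟩

theorem one_add_mul_log_le_mul_log {C : ℝ} (hC : 0 < C) {m m' ℓ : ℕ} (hm' : 0 < m')
    (hsum : m' + ℓ = m) (hℓ : (m : ℝ) / C < ℓ) :
    1 + C * Real.log m' ≤ C * Real.log m := by
  have hm : (0 : ℝ) < m := by exact_mod_cast hm'.trans_le (hsum ▸ Nat.le_add_right m' ℓ)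
  have hm'R : (0 : ℝ) < m' := by exact_mod_cast hm'
  have hsumR : (m' : ℝ) + ℓ = m := by exact_mod_cast hsum
  have hlog : 1 - (m / m' : ℝ)⁻¹ ≤ Real.log m - Real.log m' := by
    rw [← Real.log_div hm.ne' hm'R.ne']
    exact Real.one_sub_inv_le_log_of_pos (div_pos hm hm'R)
  have hℓ' : m < C * ℓ := by rwa [div_lt_iff₀ hC, mul_comm] at hℓ
  rw [inv_div, one_sub_div hm.ne', ← hsumR, add_sub_cancel_left, hsumR] at hlog
  have : 1 ≤ C * (ℓ / m) := by rw [mul_div_assoc', le_div_iff₀ hm]; linarith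
  nlinarith

theorem exists_isCycleDecomp_length_le [Finite V] {C : ℝ} (hC : 0 < C)
    (hcyc : ∀ D' : V → V → Prop, IsOriented D' → IsEulerian D' → 1 ≤ numEdges D' →
      ∃ c : List V, IsCycle D' c ∧ (numEdges D' : ℝ) / C < (c.length : ℝ))
    (D : V → V → Prop) (horient : IsOriented D) (heul : IsEulerian D) :
    ∃ Cs : List (List V), IsCycleDecomp D Cs ∧
      (Cs.length : ℝ) ≤ 1 + C * Real.log (numEdges D) := by
  rcases (numEdges D).eq_zero_or_pos with h0 | hpos
  · exact ⟨[], isCycleDecomp_nil (numEdges_eq_zero_iff.mp h0), by simp [h0]⟩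
  obtain ⟨c, hc, hlen⟩ := hcyc D horient heul hpos
  set D' := D \ cycleDigraph c
  have hsum : numEdges D' + c.length = numEdges D := by
    rw [← numEdges_cycleDigraph hc.2.1]; exact numEdges_sdiff_add hc.cycleDigraph_le
  rcases (numEdges D').eq_zero_or_pos with h0' | hpos'
  · exact ⟨[c], (isCycleDecomp_nil (numEdges_eq_zero_iff.mp h0')).cons hc, by simp; positivity⟩
  have : numEdges D' < numEdges D := by have := hc.1; omega
  obtain ⟨Cs, hCs, hCslen⟩ := exists_isCycleDecomp_length_le hC hcyc D'
    (horient.mono sdiff_le) (heul.sdiff (isEulerian_cycleDigraph hc.2.1) hc.cycleDigraph_le)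
  refine ⟨c :: Cs, hCs.cons hc, ?_⟩
  have := one_add_mul_log_le_mul_log hC hpos' hsum hlen
  push_cast [List.length_cons]
  linarith
termination_by numEdges D

/-- Suppose every Eulerian oriented graph on the same `n`-vertex set with at
least one edge contains a cycle of length more than `r/(24 n^{4/3})`, where `r` is its number
of edges. Then iteratively removing longest cycles terminates within `50 n^{4/3} log n` steps;
consequently, every Eulerian oriented graph on `n` vertices can be decomposed into at most
`50 n^{4/3} log n` cycles. -/
theorem eulerian_cycle_decomposition {V : Type*} [Fintype V] (n : ℕ)
    (hcard : Fintype.card V = n) (D : V → V → Prop)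
    (horient : ∀ u v, D u v → ¬ D v u)
    (heul : ∀ v, outDeg D v = inDeg D v)
    (hcyc : ∀ D' : V → V → Prop, (∀ u v, D' u v → ¬ D' v u) →
      (∀ v, outDeg D' v = inDeg D' v) → 1 ≤ numEdges D' →
      ∃ c : List V, IsCycle D' c ∧
        (numEdges D' : ℝ) / (24 * (n : ℝ) ^ ((4 : ℝ) / 3)) < (c.length : ℝ)) :
    ∃ Cs : List (List V), IsCycleDecomp D Cs ∧
      (Cs.length : ℝ) ≤ 50 * (n : ℝ) ^ ((4 : ℝ) / 3) * Real.log n := by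
  rcases (numEdges D).eq_zero_or_pos with h0 | hpos
  · exact ⟨[], isCycleDecomp_nil (numEdges_eq_zero_iff.mp h0), by
      simpa using by positivity⟩
  obtain ⟨u, v, huv⟩ : ∃ u v, D u v := by simpa [numEdges_eq_zero_iff] using hpos.ne'
  have hn : 2 ≤ n := hcard ▸ Fintype.one_lt_card_iff.mpr ⟨u, v, fun h => horient u v huv (h ▸ huv)⟩
  have hm : numEdges D ≤ n ^ 2 := by
    simpa [numEdges, sq, hcard] using Finite.card_subtype_le (fun e : V × V => D e.1 e.2)
  set X := (n : ℝ) ^ ((4 : ℝ) / 3)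
  have hX : 1 ≤ X := Real.one_le_rpow (by exact_mod_cast (by omega : 1 ≤ n)) (by norm_num)
  have hlog : 1 / 2 < Real.log n :=
    (by norm_num : (1 : ℝ) / 2 < 0.6931471803).trans
      (Real.log_two_gt_d9.trans_le (Real.log_le_log two_pos (by exact_mod_cast hn)))
  obtain ⟨Cs, hCs, hlen⟩ :=
    exists_isCycleDecomp_length_le (by positivity) hcyc D horient heul
  refine ⟨Cs, hCs, ?_⟩
  calc (Cs.length : ℝ) ≤ 1 + 24 * X * Real.log (numEdges D) := hlen
    _ ≤ 1 + 24 * X * Real.log ((n : ℝ) ^ 2) := by gcongr; exact_mod_cast hm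
    _ ≤ 50 * X * Real.log n := by
      have : 1 / 2 ≤ X * Real.log n := by nlinarith
      rw [Real.log_pow]; push_cast; linarith
end
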